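/- Let q be a smooth positive density on ℝ^d and ĝ : ℝ^d → ℝ^d a smooth vector field satisfying the boundary condition lim_{‖x‖→∞} q(x)ĝ(x) = 0 componentwise, with all relevant integrals finite. Then E_q[‖ĝ(x) - ∇log q(x)‖₂²] = E_q[‖ĝ(x)‖₂² + 2 div ĝ(x)] + E_q[‖∇log q(x)‖₂²]. -/

import Mathlib

open MeasureTheory Filter Set

lemma fubini_slice (n : ℕ) (c : (Fin (n+1) → ℝ) → ℝ) (hc : Measurable c) (j : Fin (n+1)) :
    ∫⁻ t : ℝ, ∫⁻ y : (Fin n → ℝ), ENNReal.ofReal (c (j.insertNth t y)) =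
      ∫⁻ x, ENNReal.ofReal (c x) := by
  have hmp := (measurePreserving_piFinSuccAbove (fun _ : Fin (n+1) => (volume : Measure ℝ)) j).symm
    (e := MeasurableEquiv.piFinSuccAbove (fun _ => ℝ) j)
  have hmeas : Measurable fun x => ENNReal.ofReal (c x) :=
    ENNReal.measurable_ofReal.comp hc
  have hvol : (volume : Measure (Fin (n+1) → ℝ)) = Measure.pi fun _ => volume := rfl
  have hvol' : (volume : Measure (Fin n → ℝ)) = Measure.pi fun _ => volume := rfl
  have h1 := MeasureTheory.lintegral_prod (μ := (volume : Measure ℝ))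
    (ν := Measure.pi fun _ : Fin n => volume)
    (fun p => ENNReal.ofReal (c ((MeasurableEquiv.piFinSuccAbove (fun _ => ℝ) j).symm p)))
    (hmeas.comp (MeasurableEquiv.piFinSuccAbove _ j).symm.measurable).aemeasurable
  calc ∫⁻ t : ℝ, ∫⁻ y : (Fin n → ℝ), ENNReal.ofReal (c (j.insertNth t y))
      = ∫⁻ t : ℝ, ∫⁻ y : (Fin n → ℝ), ENNReal.ofReal
          (c ((MeasurableEquiv.piFinSuccAbove (fun _ => ℝ) j).symm (t, y)))
          ∂(Measure.pi fun _ => volume) := by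
        rw [← hvol']
        simp [MeasurableEquiv.piFinSuccAbove, Fin.insertNthEquiv]
    _ = ∫⁻ p : ℝ × (Fin n → ℝ), ENNReal.ofReal
          (c ((MeasurableEquiv.piFinSuccAbove (fun _ => ℝ) j).symm p))
          ∂((volume : Measure ℝ).prod (Measure.pi fun _ => volume)) := h1.symm
    _ = ∫⁻ x, ENNReal.ofReal (c x) ∂(Measure.pi fun _ => volume) := hmp.lintegral_comp hmeas
    _ = ∫⁻ x, ENNReal.ofReal (c x) := by rw [← hvol]

lemma integral_div_eq_zero (n : ℕ) (f : Fin (n+1) → ((Fin (n+1) → ℝ) → ℝ))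
    (hf : ∀ j, ContDiff ℝ (⊤ : ℕ∞) (f j))
    (hdiv : Integrable (fun x => ∑ j, fderiv ℝ (f j) x (Pi.single j 1)))
    (c : (Fin (n+1) → ℝ) → ℝ) (hc : Continuous c) (hci : Integrable c)
    (hfc : ∀ j x, |f j x| ≤ c x) :
    ∫ x, ∑ j, fderiv ℝ (f j) x (Pi.single j 1) = 0 := by
  set divf : (Fin (n+1) → ℝ) → ℝ := fun x => ∑ j, fderiv ℝ (f j) x (Pi.single j 1) with hdivf
  -- divergence theorem on boxes
  have hPhi : ∀ R : ℝ, 0 ≤ R →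
      ∫ x in Icc (fun _ => -R) (fun _ => R), divf x =
      ∑ j : Fin (n+1),
        ((∫ y in Icc (fun _ => -R) (fun _ => R : Fin n → ℝ), f j (j.insertNth R y)) -
         ∫ y in Icc (fun _ => -R) (fun _ => R : Fin n → ℝ), f j (j.insertNth (-R) y)) := by
    intro R hR
    have hle : (fun _ : Fin (n+1) => -R) ≤ fun _ => R := fun i => by simp [neg_le_self hR]
    have := MeasureTheory.integral_divergence_of_hasFDerivAt_off_countable'
      (fun _ => -R) (fun _ => R) hle f (fun j x => fderiv ℝ (f j) x) ∅ countable_empty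
      (fun j => ((hf j).continuous).continuousOn)
      (fun x _ j => ((hf j).differentiable (by simp) x).hasFDerivAt)
      (hdiv.integrableOn)
    simpa [Function.comp_def, hdivf] using this
  -- slice masses
  set W : Fin (n+1) → ℝ → ENNReal :=
    fun j t => ∫⁻ y : (Fin n → ℝ), ENNReal.ofReal (c (j.insertNth t y)) with hW
  have hWmeas : ∀ j, Measurable (W j) := by
    intro j
    apply Measurable.lintegral_prod_right
    have : (fun p : ℝ × (Fin n → ℝ) => j.insertNth p.1 p.2) =
        (MeasurableEquiv.piFinSuccAbove (fun _ : Fin (n+1) => ℝ) j).symm := by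
      ext p i
      simp [MeasurableEquiv.piFinSuccAbove, Fin.insertNthEquiv]
    exact ENNReal.measurable_ofReal.comp <| hc.measurable.comp <|
      (this ▸ (MeasurableEquiv.piFinSuccAbove (fun _ : Fin (n+1) => ℝ) j).symm.measurable)
  set K : ENNReal := ∫⁻ x, ENNReal.ofReal (c x) with hK
  have hKfin : K < ⊤ := by
    refine lt_of_le_of_lt (lintegral_mono fun x => ?_) hci.2
    rw [← ofReal_norm]
    exact ENNReal.ofReal_le_ofReal (le_abs_self _)
  have hWint : ∀ j, ∫⁻ t, W j t = K := fun j => fubini_slice n c hc.measurable j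
  have hWint' : ∀ j, ∫⁻ t, W j (-t) = K := by
    intro j
    rw [← hWint j]
    exact (Measure.measurePreserving_neg (volume : Measure ℝ)).lintegral_comp (hWmeas j)
  set h : ℝ → ENNReal := fun R => ∑ j : Fin (n+1), (W j R + W j (-R)) with hh
  have hhmeas : Measurable h := by
    apply Finset.measurable_sum
    intro j _
    exact (hWmeas j).add ((hWmeas j).comp measurable_neg)
  have hhint : ∫⁻ R, h R < ⊤ := by
    rw [hh, lintegral_finset_sum]
    · refine ENNReal.sum_lt_top.2 fun j _ => ?_
      rw [lintegral_add_left (hWmeas j)]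
      rw [hWint j, hWint' j]
      exact ENNReal.add_lt_top.2 ⟨hKfin, hKfin⟩
    · exact fun j _ => (hWmeas j).add ((hWmeas j).comp measurable_neg)
  -- frequently small boundary mass
  have hfreq : ∀ ε : ℝ, 0 < ε → ∀ R₀ : ℝ, ∃ R, R₀ ≤ R ∧ h R < ENNReal.ofReal ε := by
    intro ε hε R₀
    by_contra hcon
    push_neg at hcon
    have : ∫⁻ R in Ici R₀, ENNReal.ofReal ε ≤ ∫⁻ R in Ici R₀, h R :=
      setLIntegral_mono hhmeas fun R hR => hcon R hR
    rw [setLIntegral_const] at this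
    have hvol : (volume (Ici R₀)) = ⊤ := by simp
    rw [hvol, ENNReal.mul_top (ENNReal.ofReal_pos.2 hε).ne'] at this
    exact absurd (le_trans this (setLIntegral_le_lintegral _ _)) (by simpa using hhint.ne)
  -- face integral bound
  have hface : ∀ (j : Fin (n+1)) (R t : ℝ), W j t ≠ ⊤ →
      |∫ y in Icc (fun _ => -R) (fun _ => R : Fin n → ℝ), f j (j.insertNth t y)|
        ≤ (W j t).toReal := by
    intro j R t hWt
    have h1 := norm_integral_le_lintegral_norm
      (μ := (volume : Measure (Fin n → ℝ)).restrict (Icc (fun _ => -R) (fun _ => R)))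
      (f := fun y => f j (j.insertNth t y))
    rw [Real.norm_eq_abs] at h1
    refine h1.trans (ENNReal.toReal_mono hWt ?_)
    refine le_trans (setLIntegral_le_lintegral _ _) (lintegral_mono fun y => ?_)
    rw [Real.norm_eq_abs]
    exact ENNReal.ofReal_le_ofReal (hfc j _)
  -- the candidate value
  set I : ℝ := ∫ x, divf x with hI
  have habs : ∀ ε : ℝ, 0 < ε → |I| ≤ ε := by
    intro ε hε
    set box : ℕ → Set (Fin (n+1) → ℝ) :=
      fun k => Icc (fun _ => -(k:ℝ)) (fun _ => (k:ℝ)) with hbox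
    have hboxmeas : ∀ k, MeasurableSet (box k) := fun k => measurableSet_Icc
    have hboxmono : Monotone box := fun k l hkl =>
      Icc_subset_Icc (fun i => by simp; exact_mod_cast hkl) (fun i => by exact (Nat.cast_le.2 hkl : (k:ℝ) ≤ l))
    have hboxunion : ⋃ k, box k = univ := by
      ext x
      simp only [mem_iUnion, mem_univ, iff_true]
      obtain ⟨k, hk⟩ := exists_nat_ge ‖x‖
      refine ⟨k, fun i => ?_, fun i => ?_⟩
      · have := (abs_le.1 ((norm_le_pi_norm x i).trans hk)).1
        simpa using this
      · exact (abs_le.1 ((norm_le_pi_norm x i).trans hk)).2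
    have htend : Tendsto (fun k => ∫ x in box k, |divf x|) atTop (nhds (∫ x, |divf x|)) := by
      have := tendsto_setIntegral_of_monotone (f := fun x => |divf x|) hboxmeas hboxmono
        (by rw [hboxunion]; exact (hdiv.abs).integrableOn)
      rwa [hboxunion, setIntegral_univ] at this
    obtain ⟨k, hk⟩ := Metric.tendsto_atTop.1 htend (ε/2) (by linarith)
    have hkk := hk k le_rfl
    rw [Real.dist_eq] at hkk
    obtain ⟨R, hRk, hRsmall⟩ := hfreq (ε/2) (by linarith) (max (k:ℝ) 0)
    have hR0 : (0:ℝ) ≤ R := le_trans (le_max_right _ _) hRk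
    have hRk' : ((k:ℕ):ℝ) ≤ R := le_trans (le_max_left _ _) hRk
    set S : Set (Fin (n+1) → ℝ) := Icc (fun _ => -R) (fun _ => R) with hS
    have hSsub : box k ⊆ S := Icc_subset_Icc
      (fun i => by simpa using hRk') (fun i => hRk')
    -- tail bound
    have hIsplit : (∫ x in S, divf x) + ∫ x in Sᶜ, divf x = I :=
      integral_add_compl measurableSet_Icc hdiv
    have hIsplit' : (∫ x in S, |divf x|) + ∫ x in Sᶜ, |divf x| = ∫ x, |divf x| :=
      integral_add_compl measurableSet_Icc hdiv.abs
    have hmonoS : ∫ x in box k, |divf x| ≤ ∫ x in S, |divf x| := by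
      refine setIntegral_mono_set (hdiv.abs.integrableOn)
        (Eventually.of_forall fun x => abs_nonneg _) (HasSubset.Subset.eventuallyLE hSsub)
    have h1 : |I - ∫ x in S, divf x| ≤ ε/2 := by
      have habs1 : |∫ x in Sᶜ, divf x| ≤ ∫ x in Sᶜ, |divf x| := by
        simpa [Real.norm_eq_abs] using
          norm_integral_le_integral_norm (μ := volume.restrict Sᶜ) divf
      have : I - ∫ x in S, divf x = ∫ x in Sᶜ, divf x := by linarith
      rw [this]
      have : ∫ x in Sᶜ, |divf x| ≤ ε/2 := by
        obtain ⟨hu, hv⟩ := abs_le.1 (le_of_lt hkk)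
        linarith
      linarith
    -- boundary bound
    have h2 : |∫ x in S, divf x| ≤ ε/2 := by
      rw [hS, hPhi R hR0]
      have hRtop : h R ≠ ⊤ := (hRsmall.trans_le le_top).trans_le (le_refl _) |>.ne
      have hterm : ∀ j : Fin (n+1), W j R + W j (-R) ≤ h R := fun j =>
        Finset.single_le_sum (f := fun j => W j R + W j (-R))
          (fun i _ => zero_le) (Finset.mem_univ j)
      have hWfin1 : ∀ j, W j R ≠ ⊤ := fun j =>
        ne_top_of_le_ne_top hRtop (le_trans le_self_add (hterm j))
      have hWfin2 : ∀ j, W j (-R) ≠ ⊤ := fun j =>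
        ne_top_of_le_ne_top hRtop (le_trans le_add_self (hterm j))
      calc |∑ j : Fin (n+1),
            ((∫ y in Icc (fun _ => -R) (fun _ => R : Fin n → ℝ), f j (j.insertNth R y)) -
             ∫ y in Icc (fun _ => -R) (fun _ => R : Fin n → ℝ), f j (j.insertNth (-R) y))|
          ≤ ∑ j : Fin (n+1),
            |(∫ y in Icc (fun _ => -R) (fun _ => R : Fin n → ℝ), f j (j.insertNth R y)) -
             ∫ y in Icc (fun _ => -R) (fun _ => R : Fin n → ℝ), f j (j.insertNth (-R) y)| :=
            Finset.abs_sum_le_sum_abs _ _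
        _ ≤ ∑ j : Fin (n+1), ((W j R).toReal + (W j (-R)).toReal) := by
            refine Finset.sum_le_sum fun j _ => ?_
            refine le_trans (abs_sub _ _) ?_
            exact add_le_add (hface j R R (hWfin1 j)) (hface j R (-R) (hWfin2 j))
        _ = (h R).toReal := by
            rw [hh, ENNReal.toReal_sum (fun j _ => ?_)]
            · exact Finset.sum_congr rfl fun j _ =>
                (ENNReal.toReal_add (hWfin1 j) (hWfin2 j)).symm
            · exact ENNReal.add_ne_top.2 ⟨hWfin1 j, hWfin2 j⟩
        _ ≤ ε/2 := ENNReal.toReal_le_of_le_ofReal (by linarith) hRsmall.le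
    calc |I| = |(I - ∫ x in S, divf x) + ∫ x in S, divf x| := by ring_nf
      _ ≤ |I - ∫ x in S, divf x| + |∫ x in S, divf x| := abs_add_le _ _
      _ ≤ ε/2 + ε/2 := add_le_add h1 h2
      _ = ε := by ring
  by_contra hne
  have := habs (|I|/2) (by positivity)
  have : |I| ≤ 0 := by linarith
  exact hne (abs_nonpos_iff.1 this)


open scoped RealInnerProductSpace

set_option maxHeartbeats 1000000 in
/-- The score matching identity (Hyvärinen, 2005): the Fisher divergence
decomposes via integration by parts,
`E_q[‖ghat - ∇log q‖²] = E_q[‖ghat‖² + 2 div ghat] + E_q[‖∇log q‖²]`. -/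
theorem score_matching_identity (d : ℕ)
    (q : EuclideanSpace ℝ (Fin d) → ℝ)
    (ghat : EuclideanSpace ℝ (Fin d) → EuclideanSpace ℝ (Fin d))
    (hq : ContDiff ℝ (⊤ : ℕ∞) q) (hqpos : ∀ x, 0 < q x) (hqint : ∫ x, q x = 1)
    (hghat : ContDiff ℝ (⊤ : ℕ∞) ghat)
    (hbound : Tendsto (fun x => q x • ghat x)
      (Bornology.cobounded (EuclideanSpace ℝ (Fin d))) (nhds 0))
    (hint1 : Integrable (fun x =>
      q x * ‖ghat x - gradient (fun y => Real.log (q y)) x‖ ^ 2))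
    (hint2 : Integrable (fun x => q x * (‖ghat x‖ ^ 2
      + 2 * ∑ j : Fin d, fderiv ℝ ghat x (EuclideanSpace.single j 1) j)))
    (hint3 : Integrable (fun x =>
      q x * ‖gradient (fun y => Real.log (q y)) x‖ ^ 2)) :
    ∫ x, q x * ‖ghat x - gradient (fun y => Real.log (q y)) x‖ ^ 2 =
      (∫ x, q x * (‖ghat x‖ ^ 2
        + 2 * ∑ j : Fin d, fderiv ℝ ghat x (EuclideanSpace.single j 1) j))
      + ∫ x, q x * ‖gradient (fun y => Real.log (q y)) x‖ ^ 2 := by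
  obtain _ | n := d
  · have hz : ∀ v : EuclideanSpace ℝ (Fin 0), v = 0 := fun v => Subsingleton.elim _ _
    simp [hz]
  -- basic differentiability/continuity facts
  have hqd : Differentiable ℝ q := hq.differentiable (by simp)
  have hgd : Differentiable ℝ ghat := hghat.differentiable (by simp)
  have hgradq_cont : Continuous fun x : (EuclideanSpace ℝ (Fin (n+1))) => gradient q x :=
    (InnerProductSpace.toDual ℝ (EuclideanSpace ℝ (Fin (n+1)))).symm.continuous.comp (hq.continuous_fderiv (by simp))
  -- the score function
  have hgrad_log : ∀ x : (EuclideanSpace ℝ (Fin (n+1))), gradient (fun y => Real.log (q y)) x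
      = (q x)⁻¹ • gradient q x := by
    intro x
    have hlog : HasFDerivAt (fun y => Real.log (q y)) ((q x)⁻¹ • fderiv ℝ q x) x := by
      exact (Real.hasDerivAt_log (hqpos x).ne').comp_hasFDerivAt x (hqd x).hasFDerivAt
    rw [gradient, gradient, hlog.fderiv, _root_.map_smul]
  set sc : (EuclideanSpace ℝ (Fin (n+1))) → (EuclideanSpace ℝ (Fin (n+1))) := fun x => (q x)⁻¹ • gradient q x with hsc
  have hsc_cont : Continuous sc :=
    ((hq.continuous.inv₀ fun x => (hqpos x).ne')).smul hgradq_cont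
  have hgrad_inner : ∀ x v : (EuclideanSpace ℝ (Fin (n+1))), ⟪gradient q x, v⟫ = fderiv ℝ q x v := by
    intro x v; rw [gradient]; exact InnerProductSpace.toDual_symm_apply
  -- abbreviations
  set divg : (EuclideanSpace ℝ (Fin (n+1))) → ℝ := fun x => ∑ j : Fin (n+1), fderiv ℝ ghat x (EuclideanSpace.single j 1) j
    with hdivg
  have hdivg_cont : Continuous divg := by
    refine continuous_finset_sum _ fun j _ => ?_
    have : Continuous fun x : (EuclideanSpace ℝ (Fin (n+1))) => fderiv ℝ ghat x := hghat.continuous_fderiv (by simp)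
    exact (EuclideanSpace.proj (𝕜 := ℝ) j).continuous.comp
      ((ContinuousLinearMap.apply ℝ (EuclideanSpace ℝ (Fin (n+1))) (EuclideanSpace.single j 1)).continuous.comp this)
  set A : (EuclideanSpace ℝ (Fin (n+1))) → ℝ := fun x => q x * ‖ghat x‖ ^ 2 with hA
  set P : (EuclideanSpace ℝ (Fin (n+1))) → ℝ := fun x => ⟪gradient q x, ghat x⟫ with hP
  set S2 : (EuclideanSpace ℝ (Fin (n+1))) → ℝ := fun x => q x * ‖sc x‖ ^ 2 with hS2
  set D : (EuclideanSpace ℝ (Fin (n+1))) → ℝ := fun x => q x * divg x with hD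
  -- rewrite the score function in all integrals
  simp only [hgrad_log] at hint1 hint3 ⊢
  have hscx : ∀ x, (q x)⁻¹ • gradient q x = sc x := fun x => by rw [hsc]
  -- integrability
  have hqint' : Integrable q := by
    by_contra hcon
    rw [integral_undef hcon] at hqint
    exact one_ne_zero hqint.symm
  have hAcont : Continuous A := by
    rw [hA]; exact hq.continuous.mul ((hghat.continuous.norm).pow 2)
  have hA_int : Integrable A := by
    refine Integrable.mono' ((hint1.const_mul 2).add (hint3.const_mul 2))
      hAcont.aestronglyMeasurable (Eventually.of_forall fun x => ?_)
    have h2 : ‖ghat x‖ ≤ ‖ghat x - sc x‖ + ‖sc x‖ := by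
      simpa using norm_add_le (ghat x - sc x) (sc x)
    have h1 : ‖ghat x‖ ^ 2 ≤ 2 * ‖ghat x - sc x‖ ^ 2 + 2 * ‖sc x‖ ^ 2 := by
      nlinarith [norm_nonneg (ghat x - sc x), norm_nonneg (sc x), norm_nonneg (ghat x),
        sq_nonneg (‖ghat x - sc x‖ - ‖sc x‖)]
    have hq0 := (hqpos x).le
    simp only [hA, Pi.add_apply]
    rw [Real.norm_eq_abs, abs_of_nonneg (by positivity), hscx x]
    nlinarith [mul_le_mul_of_nonneg_left h1 hq0]
  have hPcont : Continuous P := by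
    rw [hP]; exact continuous_inner.comp (hgradq_cont.prodMk hghat.continuous)
  have hP_int : Integrable P := by
    refine Integrable.mono' ((hA_int.const_mul 2⁻¹).add (hint3.const_mul 2⁻¹))
      hPcont.aestronglyMeasurable (Eventually.of_forall fun x => ?_)
    have hgq : gradient q x = q x • sc x := by
      simp only [hsc, smul_smul]
      rw [mul_inv_cancel₀ (hqpos x).ne', one_smul]
    have habsP : |P x| = q x * |⟪ghat x, sc x⟫| := by
      simp only [hP]
      rw [hgq, real_inner_smul_left, real_inner_comm, abs_mul,
        abs_of_nonneg (hqpos x).le]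
    rw [Real.norm_eq_abs, habsP]
    have hcs := abs_real_inner_le_norm (ghat x) (sc x)
    have hq0 := (hqpos x).le
    simp only [Pi.add_apply, hA]
    rw [hscx x]
    nlinarith [mul_le_mul_of_nonneg_left hcs hq0,
      mul_nonneg hq0 (sq_nonneg (‖ghat x‖ - ‖sc x‖))]
  have hD_int : Integrable D := by
    have heq : D = fun x => 2⁻¹ * ((q x * (‖ghat x‖ ^ 2 + 2 * divg x)) - A x) := by
      funext x; simp only [hD, hA]; ring
    have h2' : Integrable (fun x => q x * (‖ghat x‖ ^ 2 + 2 * divg x)) := by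
      simpa only [hdivg] using hint2
    rw [heq]
    exact (h2'.sub hA_int).const_mul _
  -- the divergence identity: ∫ (P + D) = 0
  have hkey : ∫ x, (P x + D x) = 0 := by
    classical
    set F : EuclideanSpace ℝ (Fin (n+1)) → EuclideanSpace ℝ (Fin (n+1)) :=
      fun v => q v • ghat v with hF
    have hFcd : ContDiff ℝ (⊤ : ℕ∞) F := hq.smul hghat
    -- pointwise divergence of F
    have hdivF : ∀ v, ∑ j : Fin (n+1), fderiv ℝ F v (EuclideanSpace.single j 1) j
        = P v + D v := by
      intro x
      have hdF : HasFDerivAt F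
          (q x • fderiv ℝ ghat x + (fderiv ℝ q x).smulRight (ghat x)) x :=
        (hqd x).hasFDerivAt.smul (hgd x).hasFDerivAt
      rw [hdF.fderiv]
      have hinner : P x
          = ∑ j : Fin (n+1), fderiv ℝ q x (EuclideanSpace.single j 1) * ghat x j := by
        have h2 : P x = ∑ j : Fin (n+1), (gradient q x) j * ghat x j := by
          simp only [hP]
          simpa [mul_comm] using (PiLp.inner_apply (𝕜 := ℝ) (gradient q x) (ghat x))
        rw [h2]
        refine Finset.sum_congr rfl fun j _ => ?_
        have h3 := hgrad_inner x (EuclideanSpace.single j 1)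
        rw [← h3]
        rw [EuclideanSpace.inner_single_right]; simp
      rw [hinner]
      simp only [hD, hdivg, Finset.mul_sum, ← Finset.sum_add_distrib]
      refine Finset.sum_congr rfl fun j _ => ?_
      simp only [ContinuousLinearMap.add_apply, ContinuousLinearMap.smulRight_apply,
        ContinuousLinearMap.coe_smul', Pi.smul_apply, PiLp.add_apply, PiLp.smul_apply,
        smul_eq_mul]
      ring
    -- transfer to the pi world
    set L := (EuclideanSpace.equiv (Fin (n+1)) ℝ).symm with hL
    have hf : True := trivial
    have hLcd : ContDiff ℝ (⊤ : ℕ∞) (fun x : Fin (n+1) → ℝ => L x) :=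
      (EuclideanSpace.equiv (Fin (n+1)) ℝ).symm.contDiff
    have hfd : ∀ j : Fin (n+1), ContDiff ℝ (⊤ : ℕ∞) (fun x : Fin (n+1) → ℝ => F (L x) j) := by
      intro j
      have : ContDiff ℝ (⊤ : ℕ∞) fun v : EuclideanSpace ℝ (Fin (n+1)) =>
          (EuclideanSpace.proj j : EuclideanSpace ℝ (Fin (n+1)) →L[ℝ] ℝ) v :=
        (EuclideanSpace.proj (𝕜 := ℝ) j).contDiff
      exact (this.comp hFcd).comp hLcd
    have hder : ∀ (j : Fin (n+1)) (x : Fin (n+1) → ℝ),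
        fderiv ℝ (fun y : Fin (n+1) → ℝ => F (L y) j) x (Pi.single j 1)
          = fderiv ℝ F (L x) (EuclideanSpace.single j 1) j := by
      intro j x
      have hdF : HasFDerivAt F (fderiv ℝ F (L x)) (L x) :=
        (hFcd.differentiable (by simp) _).hasFDerivAt
      have h : HasFDerivAt (fun y : Fin (n+1) → ℝ => F (L y) j)
          (((EuclideanSpace.proj j : EuclideanSpace ℝ (Fin (n+1)) →L[ℝ] ℝ).comp
            (fderiv ℝ F (L x))).comp
              (L : (Fin (n+1) → ℝ) →L[ℝ] EuclideanSpace ℝ (Fin (n+1)))) x :=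
        by exact ((EuclideanSpace.proj j).hasFDerivAt.comp _ hdF).comp x L.hasFDerivAt
      rw [h.fderiv]
      simp [EuclideanSpace.proj, hL]
    have hsum : (fun x : Fin (n+1) → ℝ => ∑ j : Fin (n+1),
          fderiv ℝ (fun y : Fin (n+1) → ℝ => F (L y) j) x (Pi.single j 1))
        = fun x => P (L x) + D (L x) := by
      funext x
      rw [Finset.sum_congr rfl fun j _ => hder j x]
      exact hdivF (L x)
    -- measure-preserving transfer
    have hmp := (EuclideanSpace.volume_preserving_symm_measurableEquiv_toLp (Fin (n+1))).symm
    have hcoe : ∀ g : EuclideanSpace ℝ (Fin (n+1)) → ℝ,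
        (fun x : Fin (n+1) → ℝ => g (L x))
          = g ∘ (MeasurableEquiv.toLp 2 (Fin (n+1) → ℝ)).symm.symm := by
      intro g; rfl
    have htransI : ∀ g : EuclideanSpace ℝ (Fin (n+1)) → ℝ, Integrable g →
        Integrable fun x : Fin (n+1) → ℝ => g (L x) := by
      intro g hg
      rw [hcoe g]
      exact (hmp.integrable_comp_emb (MeasurableEquiv.measurableEmbedding _)).2 hg
    have htransE : ∀ g : EuclideanSpace ℝ (Fin (n+1)) → ℝ,
        ∫ x : Fin (n+1) → ℝ, g (L x) = ∫ v, g v := by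
      intro g
      rw [hcoe g]
      exact hmp.integral_comp (MeasurableEquiv.measurableEmbedding _) g
    -- dominating function
    have hfc : ∀ (j : Fin (n+1)) (x : Fin (n+1) → ℝ),
        |F (L x) j| ≤ 2⁻¹ * (A (L x) + q (L x)) := by
      intro j x
      set v := L x
      have hFv : |F v j| = q v * |ghat v j| := by
        simp only [hF, PiLp.smul_apply, smul_eq_mul, abs_mul, abs_of_nonneg (hqpos v).le]
      have hvj : |ghat v j| ≤ ‖ghat v‖ := by
        have := abs_real_inner_le_norm (EuclideanSpace.single j (1:ℝ)) (ghat v)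
        simpa [EuclideanSpace.inner_single_left] using this
      have hq0 := (hqpos v).le
      simp only [hA]
      calc |F v j| = q v * |ghat v j| := hFv
        _ ≤ 2⁻¹ * (q v * ‖ghat v‖ ^ 2 + q v) := by
            nlinarith [mul_le_mul_of_nonneg_left hvj hq0,
              mul_nonneg hq0 (sq_nonneg (‖ghat v‖ - 1))]
    -- apply the key divergence lemma
    have hczero := integral_div_eq_zero n (fun j (x : Fin (n+1) → ℝ) => F (L x) j) hfd
      (by rw [hsum]; exact htransI _ (hP_int.add hD_int))
      (fun x => 2⁻¹ * (A (L x) + q (L x)))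
      (by
        refine continuous_const.mul (Continuous.add ?_ ?_)
        · exact hAcont.comp L.continuous
        · exact hq.continuous.comp L.continuous)
      (by exact ((htransI _ (hA_int.add hqint')).const_mul 2⁻¹))
      hfc
    rw [hsum] at hczero
    rw [← htransE (fun v => P v + D v)]
    exact hczero
  -- pointwise identities
  have hpt1 : (fun x => q x * ‖ghat x - (q x)⁻¹ • gradient q x‖ ^ 2)
      = fun x => (A x - 2 * P x) + S2 x := by
    funext x
    rw [hscx x]
    have hnorm : ‖ghat x - sc x‖ ^ 2
        = ‖ghat x‖ ^ 2 - 2 * ⟪ghat x, sc x⟫ + ‖sc x‖ ^ 2 := by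
      rw [@norm_sub_sq_real]
    have hPx : q x * ⟪ghat x, sc x⟫ = P x := by
      simp only [hsc, real_inner_smul_right, hP]
      rw [real_inner_comm, ← mul_assoc, mul_inv_cancel₀ (hqpos x).ne', one_mul]
    simp only [hA, hS2]
    rw [hnorm, ← hPx]
    ring
  have hpt2 : (fun x => q x * (‖ghat x‖ ^ 2
        + 2 * ∑ j : Fin (n+1), fderiv ℝ ghat x (EuclideanSpace.single j 1) j))
      = fun x => A x + 2 * D x := by
    funext x
    have : ∑ j : Fin (n+1), fderiv ℝ ghat x (EuclideanSpace.single j 1) j = divg x := by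
      rw [hdivg]
    rw [this]
    simp only [hA, hD]; ring
  have hpt3 : (fun x => q x * ‖(q x)⁻¹ • gradient q x‖ ^ 2) = S2 := by
    funext x; simp only [hS2, hscx x]
  have hS2_int : Integrable S2 := by rw [← hpt3]; exact hint3
  have h1 : Integrable (fun x => A x - 2 * P x) := hA_int.sub (hP_int.const_mul 2)
  rw [hpt1, hpt2, hpt3]
  rw [integral_add h1 hS2_int, integral_sub hA_int (hP_int.const_mul 2),
    integral_const_mul, integral_add hA_int (hD_int.const_mul 2), integral_const_mul]
  have hPD : (∫ x, P x) + ∫ x, D x = 0 := by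
    rw [← integral_add hP_int hD_int]; exact hkey
  linarith
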